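/- Theorem 2 (characterization of the variant A² of the q-Heun equation). Let a(x) = ∏_{n=1}^{4}(x − q^{h_n+1/2} t_n), c(x) = ∏_{n=1}^{4}(x − q^{l_n−1/2} t_n), and b(x) = b4 x⁴ + b3 x³ + E x² + b1 x + b0 with b4, b3, b1, b0, E ∈ ℂ; denote by a3, c3 the coefficients of x³ and by a1, c1 the coefficients of x¹ in a(x) and c(x) respectively. Assume: (i) there exists a real number λ such that q^{−λ} a(0) + b0 + q^{λ} c(0) = 0 and q^{−λ−1} a(0) + b0 + q^{λ+1} c(0) = 0 (the exponents at x = 0 differ by 1); (ii) for λ as in (i), q^{−λ} a1 + b1 + q^{λ} c1 = 0 (the regular singularity x = 0 is apparent); (iii) there exists a real number μ such that q^{μ} + b4 + q^{−μ} = 0 and q^{μ+1} + b4 + q^{−μ−1} = 0 (the exponents at x = ∞ differ by 1); (iv) for μ as in (iii), q^{μ} a3 + b3 + q^{−μ} c3 = 0 (the regular singularity x = ∞ is apparent). Then b4 = −(q^{1/2} + q^{−1/2}), b3 = Σ_{n=1}^{4} (q^{h_n} + q^{l_n}) t_n, b1 = q^{(h1+h2+h3+h4+l1+l2+l3+l4)/2}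 t1 t2 t3 t4 Σ_{n=1}^{4} (q^{−h_n} + q^{−l_n}) t_n^{−1}, and b0 = −q^{(h1+h2+h3+h4+l1+l2+l3+l4)/2} (q^{1/2} + q^{−1/2}) t1 t2 t3 t4; that is, the equation is the variant of the q-Heun equation (A² − E)g = 0. -/

import Mathlib

/-!
At each singular point the characteristic equation `q^(-r) x + b + q^r y = 0` holds for two
exponents `r` and `r + 1`. Subtracting the two equations gives `(q - 1) (q^(-r-1) x - q^r y) = 0`,
and since `q ≠ 1` and `r ↦ q^r` is injective this pins the exponent down: `μ = -1/2` at infinity and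
`λ = (∑ hₙ - ∑ lₙ + 3) / 2` at zero. Substituting these exponents back into the characteristic
equations and the apparentness conditions, with the coefficients of `a` and `c` given by Vieta's
formulas, yields `b₄`, `b₀`, `b₃` and `b₁`.
-/

noncomputable def qp (q r : ℝ) : ℂ := ((q ^ r : ℝ) : ℂ)

open Polynomial

section QPower

variable {q : ℝ}

lemma qp_add (hq : 0 < q) (r s : ℝ) : qp q (r + s) = qp q r * qp q s := by
  simp only [qp, Real.rpow_add hq, Complex.ofReal_mul]

lemma qp_neg (hq : 0 < q) (r : ℝ) : qp q (-r) = (qp q r)⁻¹ := by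
  simp only [qp, Real.rpow_neg hq.le, Complex.ofReal_inv]

lemma qp_zero (q : ℝ) : qp q 0 = 1 := by simp [qp]

lemma qp_one (q : ℝ) : qp q 1 = q := by simp [qp]

lemma qp_ne_zero (hq : 0 < q) (r : ℝ) : qp q r ≠ 0 :=
  Complex.ofReal_ne_zero.mpr (Real.rpow_pos_of_pos hq r).ne'

lemma qp_injective (hq : 0 < q) (hq1 : q ≠ 1) : Function.Injective (qp q) := fun _ _ h =>
  (Real.rpow_right_inj hq hq1).mp (Complex.ofReal_injective h)

lemma qp_mul_qp_of_add_eq (hq : 0 < q) {r s u : ℝ} (h : r + s = u) :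
    qp q r * qp q s = qp q u := by
  rw [← qp_add hq, h]

lemma qp_mul_qp_neg_self (hq : 0 < q) (r : ℝ) : qp q r * qp q (-r) = 1 := by
  rw [qp_neg hq, mul_inv_cancel₀ (qp_ne_zero hq r)]

lemma exponent_eq_of_indicial_succ (hq : 0 < q) (hq1 : q ≠ 1) {r α β : ℝ} {T b : ℂ} (hT : T ≠ 0)
    (h₀ : qp q (-r) * (qp q α * T) + b + qp q r * (qp q β * T) = 0)
    (h₁ : qp q (-(r + 1)) * (qp q α * T) + b + qp q (r + 1) * (qp q β * T) = 0) :
    r = (α - β - 1) / 2 := by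
  have hr : qp q (r + 1) = qp q r * q := by rw [qp_add hq, qp_one]
  have hr' : qp q (-r) = qp q (-(r + 1)) * q := by
    rw [← qp_one q, ← qp_add hq, neg_add, neg_add_cancel_right]
  have hq' : (q : ℂ) - 1 ≠ 0 := sub_ne_zero.mpr (by exact_mod_cast hq1)
  have key : (qp q (-(r + 1) + α) - qp q (r + β)) * ((q : ℂ) - 1) * T = 0 := by
    rw [qp_add hq, qp_add hq]
    linear_combination h₀ - h₁ - qp q α * T * hr' + qp q β * T * hr
  have := qp_injective hq hq1 (sub_eq_zero.mp (by simpa [hT, hq'] using key))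
  linarith

lemma coeffs_eq_of_apparent_at_zero (hq : 0 < q) (hq1 : q ≠ 1) {r α β S : ℝ} {T b₀ b₁ U V : ℂ}
    (hT : T ≠ 0) (hS : α + β = 2 * S)
    (h₀ : qp q (-r) * (qp q α * T) + b₀ + qp q r * (qp q β * T) = 0)
    (h₁ : qp q (-(r + 1)) * (qp q α * T) + b₀ + qp q (r + 1) * (qp q β * T) = 0)
    (happ : qp q (-r) * -(qp q α * T * qp q (-(1 / 2)) * U) + b₁
      + qp q r * -(qp q β * T * qp q (1 / 2) * V) = 0) :
    b₀ = -(qp q S * (qp q (1 / 2) + qp q (-(1 / 2))) * T) ∧ b₁ = qp q S * T * (U + V) := by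
  have hr := exponent_eq_of_indicial_succ hq hq1 hT h₀ h₁
  have e₁ : qp q (-r) * qp q α = qp q S * qp q (1 / 2) := by
    rw [qp_mul_qp_of_add_eq hq (u := S + 1 / 2) (by linarith), qp_add hq]
  have e₂ : qp q r * qp q β = qp q S * qp q (-(1 / 2)) := by
    rw [qp_mul_qp_of_add_eq hq (u := S + -(1 / 2)) (by linarith), qp_add hq]
  have hhalf := qp_mul_qp_neg_self hq (1 / 2)
  constructor
  · linear_combination h₀ - T * (e₁ + e₂)
  · linear_combination happ + T * (qp q (-(1 / 2)) * U * e₁ + qp q (1 / 2) * V * e₂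
      + qp q S * (U + V) * hhalf)

lemma coeffs_eq_of_apparent_at_infinity (hq : 0 < q) (hq1 : q ≠ 1) {μ : ℝ} {b₄ b₃ A C : ℂ}
    (h₀ : qp q μ + b₄ + qp q (-μ) = 0) (h₁ : qp q (μ + 1) + b₄ + qp q (-(μ + 1)) = 0)
    (happ : qp q μ * -(qp q (1 / 2) * A) + b₃ + qp q (-μ) * -(qp q (-(1 / 2)) * C) = 0) :
    b₄ = -(qp q (1 / 2) + qp q (-(1 / 2))) ∧ b₃ = A + C := by
  have hμ : μ = -(1 / 2) := by
    have := exponent_eq_of_indicial_succ hq hq1 one_ne_zero (r := μ) (b := b₄) (α := 0) (β := 0)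
      (by rw [qp_zero, mul_one]; linear_combination h₀)
      (by rw [qp_zero, mul_one]; linear_combination h₁)
    linarith
  subst hμ
  rw [neg_neg] at h₀ happ
  exact ⟨by linear_combination h₀,
    by linear_combination happ + (A + C) * qp_mul_qp_neg_self hq (1 / 2)⟩

end QPower

section Vieta

variable {R : Type*} [CommRing R] (ρ₁ ρ₂ ρ₃ ρ₄ : R)

lemma eval_zero_quartic :
    ((X - C ρ₁) * (X - C ρ₂) * (X - C ρ₃) * (X - C ρ₄)).eval 0 = ρ₁ * ρ₂ * ρ₃ * ρ₄ := by
  simp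

lemma quartic_expand :
    (X - C ρ₁) * (X - C ρ₂) * (X - C ρ₃) * (X - C ρ₄)
      = X ^ 4 - C (ρ₁ + ρ₂ + ρ₃ + ρ₄) * X ^ 3
        + C (ρ₁ * ρ₂ + ρ₁ * ρ₃ + ρ₁ * ρ₄ + ρ₂ * ρ₃ + ρ₂ * ρ₄ + ρ₃ * ρ₄) * X ^ 2
        - C (ρ₁ * ρ₂ * ρ₃ + ρ₁ * ρ₂ * ρ₄ + ρ₁ * ρ₃ * ρ₄ + ρ₂ * ρ₃ * ρ₄) * X
        + C (ρ₁ * ρ₂ * ρ₃ * ρ₄) := by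
  simp only [C_add, C_mul]; ring

lemma coeff_three_quartic :
    ((X - C ρ₁) * (X - C ρ₂) * (X - C ρ₃) * (X - C ρ₄)).coeff 3 = -(ρ₁ + ρ₂ + ρ₃ + ρ₄) := by
  rw [quartic_expand]
  simp only [coeff_add, coeff_sub, coeff_C_mul, coeff_X_pow, coeff_C, coeff_X]
  norm_num

lemma coeff_one_quartic :
    ((X - C ρ₁) * (X - C ρ₂) * (X - C ρ₃) * (X - C ρ₄)).coeff 1
      = -(ρ₁ * ρ₂ * ρ₃ + ρ₁ * ρ₂ * ρ₄ + ρ₁ * ρ₃ * ρ₄ + ρ₂ * ρ₃ * ρ₄) := by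
  rw [quartic_expand]
  simp only [coeff_add, coeff_sub, coeff_C_mul, coeff_X_pow, coeff_C, coeff_X]
  norm_num

end Vieta

noncomputable def qQuartic (q s x₁ x₂ x₃ x₄ : ℝ) (t₁ t₂ t₃ t₄ : ℂ) : ℂ[X] :=
  (X - C (qp q (x₁ + s) * t₁)) * (X - C (qp q (x₂ + s) * t₂)) * (X - C (qp q (x₃ + s) * t₃))
    * (X - C (qp q (x₄ + s) * t₄))

section QQuartic

variable {q : ℝ}

lemma qQuartic_eval_zero (hq : 0 < q) (s x₁ x₂ x₃ x₄ : ℝ) (t₁ t₂ t₃ t₄ : ℂ) :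
    (qQuartic q s x₁ x₂ x₃ x₄ t₁ t₂ t₃ t₄).eval 0
      = qp q (x₁ + x₂ + x₃ + x₄ + 4 * s) * (t₁ * t₂ * t₃ * t₄) := by
  rw [qQuartic, eval_zero_quartic,
    show x₁ + x₂ + x₃ + x₄ + 4 * s = x₁ + s + (x₂ + s) + (x₃ + s) + (x₄ + s) by ring]
  simp only [qp_add hq]
  ring

lemma qQuartic_coeff_three (hq : 0 < q) (s x₁ x₂ x₃ x₄ : ℝ) (t₁ t₂ t₃ t₄ : ℂ) :
    (qQuartic q s x₁ x₂ x₃ x₄ t₁ t₂ t₃ t₄).coeff 3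
      = -(qp q s * (qp q x₁ * t₁ + qp q x₂ * t₂ + qp q x₃ * t₃ + qp q x₄ * t₄)) := by
  rw [qQuartic, coeff_three_quartic]
  simp only [qp_add hq]
  ring

lemma qQuartic_coeff_one (hq : 0 < q) (s x₁ x₂ x₃ x₄ : ℝ) {t₁ t₂ t₃ t₄ : ℂ} (ht₁ : t₁ ≠ 0)
    (ht₂ : t₂ ≠ 0) (ht₃ : t₃ ≠ 0) (ht₄ : t₄ ≠ 0) :
    (qQuartic q s x₁ x₂ x₃ x₄ t₁ t₂ t₃ t₄).coeff 1
      = -(qp q (x₁ + x₂ + x₃ + x₄ + 4 * s) * (t₁ * t₂ * t₃ * t₄) * qp q (-s)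
          * (qp q (-x₁) * t₁⁻¹ + qp q (-x₂) * t₂⁻¹ + qp q (-x₃) * t₃⁻¹ + qp q (-x₄) * t₄⁻¹)) := by
  rw [qQuartic, coeff_one_quartic,
    show x₁ + x₂ + x₃ + x₄ + 4 * s = x₁ + x₂ + x₃ + x₄ + s + s + s + s by ring]
  simp only [qp_add hq, qp_neg hq]
  field_simp [qp_ne_zero hq]
  ring

end QQuartic

theorem stmt10_general (q h1 h2 h3 h4 l1 l2 l3 l4 : ℝ) (hq : 0 < q) (hq1 : q ≠ 1)
    (t1 t2 t3 t4 : ℝ) (ht1 : t1 ≠ 0) (ht2 : t2 ≠ 0) (ht3 : t3 ≠ 0) (ht4 : t4 ≠ 0)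
    (b4 b3 b1 b0 : ℂ) (a c : Polynomial ℂ)
    (ha : a = (X - C (qp q (h1 + 1/2) * (t1 : ℂ))) * (X - C (qp q (h2 + 1/2) * (t2 : ℂ)))
        * (X - C (qp q (h3 + 1/2) * (t3 : ℂ))) * (X - C (qp q (h4 + 1/2) * (t4 : ℂ))))
    (hc : c = (X - C (qp q (l1 - 1/2) * (t1 : ℂ))) * (X - C (qp q (l2 - 1/2) * (t2 : ℂ)))
        * (X - C (qp q (l3 - 1/2) * (t3 : ℂ))) * (X - C (qp q (l4 - 1/2) * (t4 : ℂ))))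
    (hzero : ∃ lam : ℝ,
        (qp q (-lam) * a.eval 0 + b0 + qp q lam * c.eval 0 = 0 ∧
          qp q (-(lam + 1)) * a.eval 0 + b0 + qp q (lam + 1) * c.eval 0 = 0) ∧
        qp q (-lam) * a.coeff 1 + b1 + qp q lam * c.coeff 1 = 0)
    (hinf : ∃ μ : ℝ,
        (qp q μ + b4 + qp q (-μ) = 0 ∧ qp q (μ + 1) + b4 + qp q (-(μ + 1)) = 0) ∧
        qp q μ * a.coeff 3 + b3 + qp q (-μ) * c.coeff 3 = 0) :
    b4 = -(qp q (1/2) + qp q (-(1/2))) ∧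
    b3 = (qp q h1 + qp q l1) * (t1 : ℂ) + (qp q h2 + qp q l2) * (t2 : ℂ)
        + (qp q h3 + qp q l3) * (t3 : ℂ) + (qp q h4 + qp q l4) * (t4 : ℂ) ∧
    b1 = qp q ((h1 + h2 + h3 + h4 + l1 + l2 + l3 + l4) / 2) * (t1 : ℂ) * (t2 : ℂ) * (t3 : ℂ)
        * (t4 : ℂ) * ((qp q (-h1) + qp q (-l1)) * (t1 : ℂ)⁻¹ + (qp q (-h2) + qp q (-l2)) * (t2 : ℂ)⁻¹
            + (qp q (-h3) + qp q (-l3)) * (t3 : ℂ)⁻¹ + (qp q (-h4) + qp q (-l4)) * (t4 : ℂ)⁻¹) ∧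
    b0 = -(qp q ((h1 + h2 + h3 + h4 + l1 + l2 + l3 + l4) / 2) * (qp q (1/2) + qp q (-(1/2)))
        * (t1 : ℂ) * (t2 : ℂ) * (t3 : ℂ) * (t4 : ℂ)) := by
  obtain ⟨lam, ⟨hz₀, hz₁⟩, happ₀⟩ := hzero
  obtain ⟨μ, ⟨hi₀, hi₁⟩, happ_inf⟩ := hinf
  replace ha : a = qQuartic q (1 / 2) h1 h2 h3 h4 t1 t2 t3 t4 := ha
  replace hc : c = qQuartic q (-(1 / 2)) l1 l2 l3 l4 t1 t2 t3 t4 := by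
    simp only [hc, qQuartic, ← sub_eq_add_neg]
  have ht : ∀ t : ℝ, t ≠ 0 → (t : ℂ) ≠ 0 := fun t => Complex.ofReal_ne_zero.mpr
  rw [ha, hc, qQuartic_coeff_three hq, qQuartic_coeff_three hq] at happ_inf
  rw [ha, hc, qQuartic_coeff_one hq _ _ _ _ _ (ht _ ht1) (ht _ ht2) (ht _ ht3) (ht _ ht4),
    qQuartic_coeff_one hq _ _ _ _ _ (ht _ ht1) (ht _ ht2) (ht _ ht3) (ht _ ht4), neg_neg] at happ₀
  rw [ha, hc, qQuartic_eval_zero hq, qQuartic_eval_zero hq] at hz₀ hz₁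
  obtain ⟨hb4, hb3⟩ := coeffs_eq_of_apparent_at_infinity hq hq1 hi₀ hi₁ happ_inf
  obtain ⟨hb0, hb1⟩ := coeffs_eq_of_apparent_at_zero hq hq1 (by simp [*])
    (S := (h1 + h2 + h3 + h4 + l1 + l2 + l3 + l4) / 2) (by ring) hz₀ hz₁ happ₀
  exact ⟨hb4, by rw [hb3]; ring, by rw [hb1]; ring, by rw [hb0]; ring⟩

open Polynomial in
theorem stmt10 (q h1 h2 h3 h4 l1 l2 l3 l4 : ℝ) (hq : 0 < q) (hq1 : q ≠ 1)
    (t1 t2 t3 t4 : ℝ) (ht1 : t1 ≠ 0) (ht2 : t2 ≠ 0) (ht3 : t3 ≠ 0) (ht4 : t4 ≠ 0)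
    (b4 b3 b1 b0 E : ℂ) (a c : Polynomial ℂ)
    (ha : a = (X - C (qp q (h1 + 1/2) * (t1 : ℂ))) * (X - C (qp q (h2 + 1/2) * (t2 : ℂ)))
        * (X - C (qp q (h3 + 1/2) * (t3 : ℂ))) * (X - C (qp q (h4 + 1/2) * (t4 : ℂ))))
    (hc : c = (X - C (qp q (l1 - 1/2) * (t1 : ℂ))) * (X - C (qp q (l2 - 1/2) * (t2 : ℂ)))
        * (X - C (qp q (l3 - 1/2) * (t3 : ℂ))) * (X - C (qp q (l4 - 1/2) * (t4 : ℂ))))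
    (hzero : ∃ lam : ℝ,
        (qp q (-lam) * a.eval 0 + b0 + qp q lam * c.eval 0 = 0 ∧
          qp q (-(lam + 1)) * a.eval 0 + b0 + qp q (lam + 1) * c.eval 0 = 0) ∧
        qp q (-lam) * a.coeff 1 + b1 + qp q lam * c.coeff 1 = 0)
    (hinf : ∃ μ : ℝ,
        (qp q μ + b4 + qp q (-μ) = 0 ∧ qp q (μ + 1) + b4 + qp q (-(μ + 1)) = 0) ∧
        qp q μ * a.coeff 3 + b3 + qp q (-μ) * c.coeff 3 = 0) :
    b4 = -(qp q (1/2) + qp q (-(1/2))) ∧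
    b3 = (qp q h1 + qp q l1) * (t1 : ℂ) + (qp q h2 + qp q l2) * (t2 : ℂ)
        + (qp q h3 + qp q l3) * (t3 : ℂ) + (qp q h4 + qp q l4) * (t4 : ℂ) ∧
    b1 = qp q ((h1 + h2 + h3 + h4 + l1 + l2 + l3 + l4) / 2) * (t1 : ℂ) * (t2 : ℂ) * (t3 : ℂ)
        * (t4 : ℂ) * ((qp q (-h1) + qp q (-l1)) * (t1 : ℂ)⁻¹ + (qp q (-h2) + qp q (-l2)) * (t2 : ℂ)⁻¹
            + (qp q (-h3) + qp q (-l3)) * (t3 : ℂ)⁻¹ + (qp q (-h4) + qp q (-l4)) * (t4 : ℂ)⁻¹) ∧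
    b0 = -(qp q ((h1 + h2 + h3 + h4 + l1 + l2 + l3 + l4) / 2) * (qp q (1/2) + qp q (-(1/2)))
        * (t1 : ℂ) * (t2 : ℂ) * (t3 : ℂ) * (t4 : ℂ)) :=
  stmt10_general q h1 h2 h3 h4 l1 l2 l3 l4 hq hq1 t1 t2 t3 t4 ht1 ht2 ht3 ht4 b4 b3 b1 b0 a c ha hc
    hzero hinf
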